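/- (Regret bound with fixed learning rate.) Let Θ ⊆ ℝ^d be a closed convex set containing 0, λ ≥ 0, G ≥ 0, and η > 0. For t = 1, …, T let L_t : ℝ^d → ℝ be convex and G-Lipschitz on Θ. Let R = R₁ + ⋯ + R_J with each R_j convex, lower semicontinuous, proper, satisfying R ≥ 0, R(0) = 0, R_{j'}(θ) ≥ R_{j'}(prox_{ηλR_j}(θ)) for all θ and j' < j, and R(θ) ≥ R(Π_Θ(θ)) for all θ. Consider iterates θ₁ = 0 and, for each t, θ_{t+1} obtained from θ_t by the gradient step with a subgradient of L_t, the J proximal steps with step size ηλ, and projection onto Θ. Then, with θ* = argmin_{θ ∈ Θ} Σ_{t=1}^T ( λR(θ) + L_t(θ) ), the regret Reg_T = Σ_{t=1}^T ( λR(θ_t) + L_t(θ_t) ) − Σ_{t=1}^T ( λR(θ*) + L_t(θ*) ) satisfies Reg_T ≤ (ηT/2)G² + ‖θ*‖²/(2η). -/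

import Mathlib

open RealInnerProductSpace

noncomputable section

/-- Extended-real-valued convexity of `φ : E → ℝ ∪ {+∞}`. -/
def ERealConvexOn {E : Type*} [NormedAddCommGroup E] [InnerProductSpace ℝ E]
    (φ : E → EReal) : Prop :=
  ∀ x y : E, ∀ t : ℝ, 0 ≤ t → t ≤ 1 →
    φ (t • x + (1 - t) • y) ≤ (t : EReal) * φ x + ((1 - t : ℝ) : EReal) * φ y

/-- `φ` is proper: it never takes the value `−∞` (functions into `ℝ ∪ {+∞}`
never do) and is finite somewhere. -/
def ERealProper {E : Type*} (φ : E → EReal) : Prop :=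
  (∃ x, φ x ≠ ⊤) ∧ ∀ x, φ x ≠ ⊥

/-- `x` is the proximity point `prox_φ(y)`, i.e. a minimizer of
`z ↦ (1/2)‖z − y‖² + φ(z)`. -/
def IsProxPt {E : Type*} [NormedAddCommGroup E] (φ : E → EReal) (y x : E) : Prop :=
  ∀ z : E, (((1/2) * ‖x - y‖^2 : ℝ) : EReal) + φ x ≤ (((1/2) * ‖z - y‖^2 : ℝ) : EReal) + φ z

/-- The Moreau envelope `M_φ(y) = inf_x (1/2)‖x − y‖² + φ(x)`. -/
def moreauEnvelope {E : Type*} [NormedAddCommGroup E] (φ : E → EReal) (y : E) : EReal :=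
  ⨅ x : E, (((1/2) * ‖x - y‖^2 : ℝ) : EReal) + φ x

/-- The Fenchel conjugate `φ⋆(y) = sup_x ⟨y, x⟩ − φ(x)`. -/
def fenchelConjugate {E : Type*} [NormedAddCommGroup E] [InnerProductSpace ℝ E]
    (φ : E → EReal) (y : E) : EReal :=
  ⨆ x : E, ((⟪y, x⟫ : ℝ) : EReal) - φ x

/-- `g` is a subgradient of the convex function `L` at `θ₀`. -/
def IsSubgradientAt {E : Type*} [NormedAddCommGroup E] [InnerProductSpace ℝ E]
    (L : E → ℝ) (g θ₀ : E) : Prop :=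
  ∀ θ : E, (⟪g, θ - θ₀⟫ : ℝ) ≤ L θ - L θ₀

/-- `x = prox_{c·φ}(y)`: `x` minimizes `z ↦ (1/2)‖z − y‖² + c·φ(z)`. -/
def IsProxPtOf {E : Type*} [NormedAddCommGroup E] (c : ℝ) (φ : E → EReal) (y x : E) : Prop :=
  ∀ z : E, (((1/2) * ‖x - y‖^2 : ℝ) : EReal) + (c : EReal) * φ x
    ≤ (((1/2) * ‖z - y‖^2 : ℝ) : EReal) + (c : EReal) * φ z

/-- `x = Π_Θ(y)`: `x` is the Euclidean projection of `y` onto `Θ`. -/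
def IsProjPt {E : Type*} [NormedAddCommGroup E] (Θ : Set E) (y x : E) : Prop :=
  x ∈ Θ ∧ ∀ z ∈ Θ, ‖x - y‖ ≤ ‖z - y‖

/-! Fix any comparator `θ* ∈ Θ` and follow `‖θ_t - θ*‖²` through one round. The gradient step
adds `η²G²` and removes `2η (L_t θ_t - L_t θ*)` by the subgradient inequality; the prox step for
`R_j` removes `2ηλ (R_j θ̃_j - R_j θ*)` by convexity of `R_j`; the projection onto the convex set
`Θ` does not increase it. Conditions (ii) and (iii) give `R θ_{t+1} ≤ ∑_j R_j θ̃_j`, so after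
summing over `t` the distances telescope, and `R θ₁ = 0`, `R θ_{T+1} ≥ 0` pay for the shift of
the regularizer by one round. -/

open Filter Topology

namespace EReal

lemma coe_finsetSum {ι : Type*} (s : Finset ι) (f : ι → ℝ) :
    ((∑ i ∈ s, f i : ℝ) : EReal) = ∑ i ∈ s, (f i : EReal) :=
  map_sum (⟨⟨((↑) : ℝ → EReal), coe_zero⟩, coe_add⟩ : ℝ →+ EReal) f s

lemma coe_mul_finsetSum {ι : Type*} {c : ℝ} (hc : 0 ≤ c) (s : Finset ι) (f : ι → EReal) :
    (c : EReal) * ∑ i ∈ s, f i = ∑ i ∈ s, (c : EReal) * f i :=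
  map_sum (⟨⟨((c : EReal) * ·), mul_zero _⟩,
    left_distrib_of_nonneg_of_ne_top (EReal.coe_nonneg.2 hc) (coe_ne_top c)⟩ : EReal →+ EReal)
    f s

lemma finsetSum_ne_bot {ι : Type*} {s : Finset ι} {f : ι → EReal} (h : ∀ i ∈ s, f i ≠ ⊥) :
    ∑ i ∈ s, f i ≠ ⊥ :=
  Finset.sum_induction f (· ≠ ⊥) (fun _ _ ha hb => add_ne_bot_iff.2 ⟨ha, hb⟩) zero_ne_bot h

lemma finsetSum_eq_top {ι : Type*} {s : Finset ι} {f : ι → EReal} (h : ∀ i ∈ s, f i ≠ ⊥)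
    {i : ι} (hi : i ∈ s) (htop : f i = ⊤) : ∑ j ∈ s, f j = ⊤ := by
  classical
  rw [← Finset.add_sum_erase s f hi, htop]
  exact top_add_of_ne_bot (finsetSum_ne_bot fun j hj => h j (Finset.mem_of_mem_erase hj))

lemma toReal_finsetSum {ι : Type*} {s : Finset ι} {f : ι → EReal}
    (hbot : ∀ i ∈ s, f i ≠ ⊥) (htop : ∀ i ∈ s, f i ≠ ⊤) :
    (∑ i ∈ s, f i).toReal = ∑ i ∈ s, (f i).toReal := by
  rw [Finset.sum_congr rfl fun i hi => (coe_toReal (htop i hi) (hbot i hi)).symm,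
    ← coe_finsetSum, toReal_coe]

lemma coe_mul_ne_bot {c : ℝ} (hc : 0 ≤ c) {x : EReal} (hx : x ≠ ⊥) : (c : EReal) * x ≠ ⊥ :=
  (mul_ne_bot _ _).2
    ⟨.inl (coe_ne_bot c), .inr hx, .inl (coe_ne_top c), .inl (EReal.coe_nonneg.2 hc)⟩

lemma coe_mul_ne_top (c : ℝ) {x : EReal} (htop : x ≠ ⊤) (hbot : x ≠ ⊥) :
    (c : EReal) * x ≠ ⊤ := by
  rw [← coe_toReal htop hbot, ← coe_mul]
  exact coe_ne_top _

end EReal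

lemma nonneg_of_forall_add_mul_nonneg {a b : ℝ}
    (h : ∀ s ∈ Set.Ioc (0 : ℝ) 1, 0 ≤ a + b * s) : 0 ≤ a := by
  have hlim : Tendsto (fun s => a + b * s) (𝓝[>] 0) (𝓝 a) :=
    ((by fun_prop : Continuous fun s : ℝ => a + b * s).tendsto' 0 a (by simp)).mono_left
      nhdsWithin_le_nhds
  exact ge_of_tendsto hlim (eventually_of_mem (Ioc_mem_nhdsGT one_pos) h)

lemma Fin.apply_last_le {α : Type*} [Preorder α] {n : ℕ} (f : Fin (n + 1) → α)
    (i : Fin (n + 1)) (h : ∀ k : Fin n, i ≤ k.castSucc → f k.succ ≤ f k.castSucc) :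
    f (Fin.last n) ≤ f i := by
  suffices ∀ m, i ≤ m → f (Fin.last n) ≤ f m from this i le_rfl
  intro m
  induction m using Fin.reverseInduction with
  | last => exact fun _ => le_rfl
  | cast k ih => exact fun hk => (ih (hk.trans (Fin.castSucc_le_succ k))).trans (h k hk)

lemma Fin.apply_last_le_add_sum {α : Type*} [AddCommMonoid α] [PartialOrder α]
    [IsOrderedAddMonoid α] {n : ℕ} (f : Fin (n + 1) → α) (d : Fin n → α)
    (h : ∀ k : Fin n, f k.succ ≤ f k.castSucc + d k) :
    f (Fin.last n) ≤ f 0 + ∑ k, d k := by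
  induction n with
  | zero => simp
  | succ n ih =>
    calc f (Fin.last (n + 1)) ≤ f (Fin.last n).castSucc + d (Fin.last n) := h (Fin.last n)
      _ ≤ f 0 + (∑ k : Fin n, d k.castSucc) + d (Fin.last n) := by
          gcongr
          exact ih (f ∘ Fin.castSucc) (d ∘ Fin.castSucc) fun k => h k.castSucc
      _ = f 0 + ∑ k, d k := by rw [Fin.sum_univ_castSucc, add_assoc]

lemma Finset.forall_mem_Icc_one {P : ℕ → Prop} {T : ℕ} (h1 : P 1)
    (hsucc : ∀ t ∈ Finset.Icc 1 T, P (t + 1)) : ∀ t ∈ Finset.Icc 1 T, P t := by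
  rintro (_ | _ | t) ht
  · simp at ht
  · exact h1
  · exact hsucc (t + 1) (Finset.mem_Icc.2 ⟨by omega, by have := (Finset.mem_Icc.1 ht).2; omega⟩)

lemma Finset.sum_Icc_sub_succ {G : Type*} [AddCommGroup G] (u : ℕ → G) (T : ℕ) :
    ∑ t ∈ Finset.Icc 1 T, (u t - u (t + 1)) = u 1 - u (T + 1) := by
  induction T with
  | zero => simp
  | succ T ih => rw [Finset.sum_Icc_succ_top (by omega), ih]; abel

/-- Summing the one-round inequalities: the `a` terms telescope with a shift of one round,
which costs `a 1 - a (T + 1) ≤ 0`. -/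
lemma sum_add_le_sum_add_of_forall_Icc {T : ℕ} {η K : ℝ} (hη : 0 < η) {a ℓ b A : ℕ → ℝ}
    (ha : a 1 = 0) (haT : 0 ≤ a (T + 1)) (hAT : 0 ≤ A (T + 1))
    (hstep : ∀ t ∈ Finset.Icc 1 T,
      2 * η * (a (t + 1) + ℓ t - b t) ≤ η ^ 2 * K + A t - A (t + 1)) :
    ∑ t ∈ Finset.Icc 1 T, (a t + ℓ t)
      ≤ ∑ t ∈ Finset.Icc 1 T, b t + (η * T / 2 * K + A 1 / (2 * η)) := by
  have hsum := Finset.sum_le_sum hstep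
  have hleft : ∑ t ∈ Finset.Icc 1 T, 2 * η * (a (t + 1) + ℓ t - b t)
      = 2 * η * (∑ t ∈ Finset.Icc 1 T, (a t + ℓ t) - ∑ t ∈ Finset.Icc 1 T, b t
        - ∑ t ∈ Finset.Icc 1 T, (a t - a (t + 1))) := by
    rw [← Finset.mul_sum, ← Finset.sum_sub_distrib, ← Finset.sum_sub_distrib]
    congr 1
    exact Finset.sum_congr rfl fun t _ => by ring
  have hright : ∑ t ∈ Finset.Icc 1 T, (η ^ 2 * K + A t - A (t + 1))
      = T * (η ^ 2 * K) + (A 1 - A (T + 1)) := by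
    simp only [add_sub_assoc, Finset.sum_add_distrib, Finset.sum_Icc_sub_succ, Finset.sum_const,
      Nat.card_Icc, nsmul_eq_mul, add_tsub_cancel_right]
  rw [hleft, hright, Finset.sum_Icc_sub_succ, ha] at hsum
  have hconst : η * T / 2 * K + A 1 / (2 * η) = (T * (η ^ 2 * K) + A 1) / (2 * η) := by
    field_simp
  rw [← sub_le_iff_le_add', hconst, le_div_iff₀ (by positivity)]
  nlinarith

section ProxGradient

variable {E : Type*} [NormedAddCommGroup E]

lemma IsProxPt.ne_top {ψ : E → EReal} {x y z : E} (hx : IsProxPt ψ y x) (hz : ψ z ≠ ⊤) :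
    ψ x ≠ ⊤ := by
  intro htop
  have := hx z
  rw [htop, EReal.coe_add_top] at this
  exact (EReal.add_lt_top (EReal.coe_ne_top _) hz).not_ge this

variable [InnerProductSpace ℝ E]

/-- The hypothesis yields the first-order condition `⟪x - y, z - x⟫ + c ≥ 0`, and the
three-point identity turns it into the conclusion. -/
lemma norm_sub_sq_le_of_forall_segment {x y z : E} {c : ℝ}
    (h : ∀ s ∈ Set.Ioc (0 : ℝ) 1, ‖x - y‖ ^ 2 ≤ ‖x + s • (z - x) - y‖ ^ 2 + 2 * s * c) :
    ‖x - z‖ ^ 2 ≤ ‖y - z‖ ^ 2 + 2 * c := by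
  have hfirst : 0 ≤ 2 * (⟪x - y, z - x⟫ + c) := by
    refine nonneg_of_forall_add_mul_nonneg (b := ‖z - x‖ ^ 2) fun s hs => ?_
    have hexp : ‖x + s • (z - x) - y‖ ^ 2
        = ‖x - y‖ ^ 2 + 2 * s * ⟪x - y, z - x⟫ + s ^ 2 * ‖z - x‖ ^ 2 := by
      rw [show x + s • (z - x) - y = (x - y) + s • (z - x) by abel, norm_add_sq_real,
        real_inner_smul_right, norm_smul, mul_pow, Real.norm_eq_abs, sq_abs]
      ring
    have := h s hs
    nlinarith [hs.1]
  have hid : ‖y - z‖ ^ 2 = ‖x - y‖ ^ 2 + 2 * ⟪x - y, z - x⟫ + ‖x - z‖ ^ 2 := by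
    rw [show y - z = -((x - y) + (z - x)) by abel, norm_neg, norm_add_sq_real,
      ← norm_neg (z - x), neg_sub]
  nlinarith [sq_nonneg ‖x - y‖]

lemma IsProjPt.norm_sub_sq_le {Θ : Set E} (hΘ : Convex ℝ Θ) {x y z : E}
    (hx : IsProjPt Θ y x) (hz : z ∈ Θ) : ‖x - z‖ ^ 2 ≤ ‖y - z‖ ^ 2 := by
  simpa using norm_sub_sq_le_of_forall_segment (x := x) (y := y) (z := z) (c := 0) fun s hs => by
    have hmem : x + s • (z - x) ∈ Θ := by
      simpa using hΘ.add_smul_sub_mem hx.1 hz ⟨hs.1.le, hs.2⟩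
    have := hx.2 _ hmem
    nlinarith [norm_nonneg (x - y)]

lemma ERealConvexOn.coe_mul {φ : E → EReal} (hφ : ERealConvexOn φ) {c : ℝ} (hc : 0 ≤ c) :
    ERealConvexOn fun x => (c : EReal) * φ x := by
  intro x y t ht0 ht1
  calc (c : EReal) * φ (t • x + (1 - t) • y)
      ≤ c * ((t : EReal) * φ x + ((1 - t : ℝ) : EReal) * φ y) :=
        mul_le_mul_of_nonneg_left (hφ x y t ht0 ht1) (EReal.coe_nonneg.2 hc)
    _ = t * (c * φ x) + ((1 - t : ℝ) : EReal) * (c * φ y) := by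
        rw [EReal.left_distrib_of_nonneg_of_ne_top (EReal.coe_nonneg.2 hc) (EReal.coe_ne_top c),
          mul_left_comm, mul_left_comm (c : EReal)]

lemma IsProxPt.norm_sub_sq_add_le {ψ : E → EReal} (hψ : ERealConvexOn ψ)
    (hbot : ∀ w, ψ w ≠ ⊥) {x y z : E} (hx : IsProxPt ψ y x) (hz : ψ z ≠ ⊤) :
    ‖x - z‖ ^ 2 + 2 * (ψ x).toReal ≤ ‖y - z‖ ^ 2 + 2 * (ψ z).toReal := by
  obtain ⟨a, ha⟩ : ∃ a : ℝ, ψ x = a := ⟨_, (EReal.coe_toReal (hx.ne_top hz) (hbot x)).symm⟩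
  obtain ⟨b, hb⟩ : ∃ b : ℝ, ψ z = b := ⟨_, (EReal.coe_toReal hz (hbot z)).symm⟩
  suffices ‖x - z‖ ^ 2 ≤ ‖y - z‖ ^ 2 + 2 * (b - a) by
    rw [ha, hb, EReal.toReal_coe, EReal.toReal_coe]; linarith
  refine norm_sub_sq_le_of_forall_segment fun s hs => ?_
  have hconv : ψ (x + s • (z - x)) ≤ ((s * b + (1 - s) * a : ℝ) : EReal) := by
    have := hψ z x s hs.1.le hs.2
    rwa [hb, ha, ← EReal.coe_mul, ← EReal.coe_mul, ← EReal.coe_add,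
      show s • z + (1 - s) • x = x + s • (z - x) by module] at this
  obtain ⟨w, hw⟩ : ∃ w : ℝ, ψ (x + s • (z - x)) = w :=
    ⟨_, (EReal.coe_toReal (ne_top_of_le_ne_top (EReal.coe_ne_top _) hconv) (hbot _)).symm⟩
  have hmin := hx (x + s • (z - x))
  rw [ha, hw, ← EReal.coe_add, ← EReal.coe_add, EReal.coe_le_coe_iff] at hmin
  rw [hw, EReal.coe_le_coe_iff] at hconv
  nlinarith

lemma IsSubgradientAt.norm_sub_smul_sub_sq_add_le {L : E → ℝ} {g x : E}
    (hg : IsSubgradientAt L g x) (η : ℝ) (hη : 0 ≤ η) (z : E) :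
    ‖x - η • g - z‖ ^ 2 + 2 * η * (L x - L z) ≤ ‖x - z‖ ^ 2 + η ^ 2 * ‖g‖ ^ 2 := by
  have hsub : L x - L z ≤ ⟪g, x - z⟫ := by
    have := hg z
    rw [← neg_sub x z, inner_neg_right] at this
    linarith
  have hexp : ‖x - η • g - z‖ ^ 2 = ‖x - z‖ ^ 2 - 2 * η * ⟪g, x - z⟫ + η ^ 2 * ‖g‖ ^ 2 := by
    rw [show x - η • g - z = (x - z) - η • g by abel, norm_sub_sq_real, real_inner_smul_right,
      real_inner_comm, norm_smul, mul_pow, Real.norm_eq_abs, sq_abs]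
    ring
  nlinarith

variable {J : ℕ} {Θ : Set E} {L : E → ℝ} {x g x' z : E} {y : Fin (J + 1) → E} {η G : ℝ}

lemma proxGradient_round_le (hΘ : Convex ℝ Θ) {ψ : Fin J → E → EReal}
    (hψ : ∀ j, ERealConvexOn (ψ j)) (hbot : ∀ j w, ψ j w ≠ ⊥) (hη : 0 ≤ η)
    (hg : IsSubgradientAt L g x) (hgG : ‖g‖ ≤ G) (hy0 : y 0 = x - η • g)
    (hprox : ∀ j, IsProxPt (ψ j) (y j.castSucc) (y j.succ))
    (hx' : IsProjPt Θ (y (Fin.last J)) x')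
    (hmono : ∀ j j' : Fin J, j' < j → ψ j' (y j.succ) ≤ ψ j' (y j.castSucc))
    (hproj : ∑ j, ψ j x' ≤ ∑ j, ψ j (y (Fin.last J))) (hz : z ∈ Θ) (hzψ : ∑ j, ψ j z ≠ ⊤) :
    ∑ j, ψ j x' ≠ ⊤ ∧
      ‖x' - z‖ ^ 2 + 2 * (∑ j, ψ j x').toReal + 2 * η * (L x - L z)
        ≤ ‖x - z‖ ^ 2 + 2 * (∑ j, ψ j z).toReal + η ^ 2 * G ^ 2 := by
  have hzψj : ∀ j, ψ j z ≠ ⊤ := fun j htop =>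
    hzψ (EReal.finsetSum_eq_top (fun j _ => hbot j z) (Finset.mem_univ j) htop)
  have hyψ : ∀ j, ψ j (y j.succ) ≠ ⊤ := fun j => (hprox j).ne_top (hzψj j)
  have hreg : ∑ j, ψ j x' ≤ ((∑ j, (ψ j (y j.succ)).toReal : ℝ) : EReal) := by
    rw [EReal.coe_finsetSum]
    refine hproj.trans (Finset.sum_le_sum fun j _ => ?_)
    rw [EReal.coe_toReal (hyψ j) (hbot j _)]
    exact Fin.apply_last_le (fun k => ψ j (y k)) j.succ fun k hk =>
      hmono k j (Fin.succ_le_castSucc_iff.1 hk)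
  have hx'ψ : ∑ j, ψ j x' ≠ ⊤ := ne_top_of_le_ne_top (EReal.coe_ne_top _) hreg
  have hreg' : (∑ j, ψ j x').toReal ≤ ∑ j, (ψ j (y j.succ)).toReal := by
    simpa using EReal.toReal_le_toReal hreg (EReal.finsetSum_ne_bot fun j _ => hbot j x')
      (EReal.coe_ne_top _)
  have hchain : ‖y (Fin.last J) - z‖ ^ 2
      ≤ ‖y 0 - z‖ ^ 2 + ∑ j, 2 * ((ψ j z).toReal - (ψ j (y j.succ)).toReal) :=
    Fin.apply_last_le_add_sum (fun k => ‖y k - z‖ ^ 2) _ fun j => by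
      have := (hprox j).norm_sub_sq_add_le (hψ j) (hbot j) (hzψj j)
      linarith
  rw [← Finset.mul_sum, Finset.sum_sub_distrib] at hchain
  have hgrad := hg.norm_sub_smul_sub_sq_add_le η hη z
  rw [← hy0] at hgrad
  have hG2 : ‖g‖ ^ 2 ≤ G ^ 2 := pow_le_pow_left₀ (norm_nonneg g) hgG 2
  refine ⟨hx'ψ, ?_⟩
  rw [EReal.toReal_finsetSum (fun j _ => hbot j z) (fun j _ => hzψj j)]
  nlinarith [hx'.norm_sub_sq_le hΘ hz, mul_le_mul_of_nonneg_left hG2 (sq_nonneg η)]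

lemma proxGradient_round_le_of_mul {lam : ℝ} {R : Fin J → E → EReal} (hΘ : Convex ℝ Θ)
    (hR : ∀ j, ERealConvexOn (R j)) (hbot : ∀ j w, R j w ≠ ⊥) (hlam : 0 ≤ lam) (hη : 0 < η)
    (hii : ∀ j j' : Fin J, j' < j → ∀ w w', IsProxPtOf (η * lam) (R j) w w' → R j' w' ≤ R j' w)
    (hiii : ∀ w w', IsProjPt Θ w w' → ∑ j, R j w' ≤ ∑ j, R j w)
    (hg : IsSubgradientAt L g x) (hgG : ‖g‖ ≤ G) (hy0 : y 0 = x - η • g)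
    (hprox : ∀ j, IsProxPtOf (η * lam) (R j) (y j.castSucc) (y j.succ))
    (hx' : IsProjPt Θ (y (Fin.last J)) x') (hz : z ∈ Θ)
    (hzR : (lam : EReal) * ∑ j, R j z ≠ ⊤) :
    (lam : EReal) * ∑ j, R j x' ≠ ⊤ ∧
      2 * η * (((lam : EReal) * ∑ j, R j x').toReal + L x
          - (((lam : EReal) * ∑ j, R j z).toReal + L z))
        ≤ η ^ 2 * G ^ 2 + ‖x - z‖ ^ 2 - ‖x' - z‖ ^ 2 := by
  have hc : 0 ≤ η * lam := mul_nonneg hη.le hlam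
  have hcoe_nonneg : ∀ {c : ℝ}, 0 ≤ c → (0 : EReal) ≤ c := EReal.coe_nonneg.2
  -- `IsProxPtOf (η * lam) (R j)` is by definition `IsProxPt (ψ j)`.
  let ψ : Fin J → E → EReal := fun j w => ((η * lam : ℝ) : EReal) * R j w
  have hsum : ∀ w, ∑ j, ψ j w = η * ((lam : EReal) * ∑ j, R j w) := fun w => by
    rw [← EReal.coe_mul_finsetSum hc, EReal.coe_mul, mul_assoc]
  have hψmono : ∀ j j' : Fin J, j' < j → ψ j' (y j.succ) ≤ ψ j' (y j.castSucc) :=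
    fun j j' hj => mul_le_mul_of_nonneg_left (hii j j' hj _ _ (hprox j)) (hcoe_nonneg hc)
  have hψproj : ∑ j, ψ j x' ≤ ∑ j, ψ j (y (Fin.last J)) := by
    rw [hsum, hsum]
    exact mul_le_mul_of_nonneg_left
      (mul_le_mul_of_nonneg_left (hiii _ _ hx') (hcoe_nonneg hlam)) (hcoe_nonneg hη.le)
  have hψz : ∑ j, ψ j z ≠ ⊤ := by
    rw [hsum]
    exact EReal.coe_mul_ne_top η hzR
      (EReal.coe_mul_ne_bot hlam (EReal.finsetSum_ne_bot fun j _ => hbot j z))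
  obtain ⟨hx'R, hle⟩ := proxGradient_round_le hΘ (fun j => (hR j).coe_mul hc)
    (fun j w => EReal.coe_mul_ne_bot hc (hbot j w)) hη.le hg hgG hy0 hprox hx' hψmono hψproj
    hz hψz
  rw [hsum] at hx'R
  rw [hsum, hsum, EReal.toReal_mul (x := η), EReal.toReal_mul (x := η), EReal.toReal_coe] at hle
  refine ⟨fun htop => hx'R (by rw [htop, EReal.coe_mul_top_of_pos hη]), by linarith⟩

end ProxGradient

theorem regret_fixed_rate_general {d J : ℕ} (T : ℕ) (hT : 0 < T)
    (Θ : Set (EuclideanSpace ℝ (Fin d))) (hΘconv : Convex ℝ Θ)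
    (hΘ0 : (0 : EuclideanSpace ℝ (Fin d)) ∈ Θ)
    (lam G η : ℝ) (hlam : 0 ≤ lam) (hη : 0 < η)
    (L : ℕ → EuclideanSpace ℝ (Fin d) → ℝ)
    (hLlip : ∀ t ∈ Finset.Icc 1 T, ∀ θ₀ ∈ Θ, ∀ g : EuclideanSpace ℝ (Fin d),
      IsSubgradientAt (L t) g θ₀ → ‖g‖ ≤ G)
    (R : Fin J → EuclideanSpace ℝ (Fin d) → EReal)
    (hRconv : ∀ j, ERealConvexOn (R j))
    (hRprop : ∀ j, ERealProper (R j))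
    (hRnonneg : ∀ θ, (0 : EReal) ≤ ∑ j, R j θ)
    (hR0 : (∑ j, R j (0 : EuclideanSpace ℝ (Fin d))) = 0)
    -- condition (ii): each prox operator does not increase the previous `R_{j'}`
    (hii : ∀ j j' : Fin J, j' < j → ∀ θ θ' : EuclideanSpace ℝ (Fin d),
      IsProxPtOf (η * lam) (R j) θ θ' → R j' θ' ≤ R j' θ)
    -- condition (iii): projecting onto `Θ` does not increase `R`
    (hiii : ∀ θ θ' : EuclideanSpace ℝ (Fin d), IsProjPt Θ θ θ' →
      (∑ j, R j θ') ≤ ∑ j, R j θ)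
    -- the iterates of the algorithm
    (θ : ℕ → EuclideanSpace ℝ (Fin d)) (g : ℕ → EuclideanSpace ℝ (Fin d))
    (θtil : ℕ → Fin (J + 1) → EuclideanSpace ℝ (Fin d))
    (hθ1 : θ 1 = 0)
    (hg : ∀ t ∈ Finset.Icc 1 T, IsSubgradientAt (L t) (g t) (θ t))
    (h0 : ∀ t ∈ Finset.Icc 1 T, θtil t 0 = θ t - η • g t)
    (hsteps : ∀ t ∈ Finset.Icc 1 T, ∀ j : Fin J,
      IsProxPtOf (η * lam) (R j) (θtil t j.castSucc) (θtil t j.succ))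
    (hproj : ∀ t ∈ Finset.Icc 1 T, IsProjPt Θ (θtil t (Fin.last J)) (θ (t + 1)))
    (θstar : EuclideanSpace ℝ (Fin d)) (hθstar : θstar ∈ Θ) :
    -- Reg_T ≤ (ηT/2)G² + ‖θ*‖²/(2η)
    (∑ t ∈ Finset.Icc 1 T, ((lam : EReal) * (∑ j, R j (θ t)) + ((L t (θ t) : ℝ) : EReal)))
      ≤ (∑ t ∈ Finset.Icc 1 T, ((lam : EReal) * (∑ j, R j θstar) + ((L t θstar : ℝ) : EReal)))
        + ((η * T / 2 * G ^ 2 + ‖θstar‖ ^ 2 / (2 * η) : ℝ) : EReal) := by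
  have hbot : ∀ x, (lam : EReal) * ∑ j, R j x ≠ ⊥ := fun x =>
    EReal.coe_mul_ne_bot hlam (EReal.finsetSum_ne_bot fun j _ => (hRprop j).2 x)
  by_cases hstar : (lam : EReal) * ∑ j, R j θstar = ⊤
  · rw [EReal.finsetSum_eq_top
      (fun t _ => EReal.add_ne_bot_iff.2 ⟨hbot θstar, EReal.coe_ne_bot _⟩)
      (Finset.left_mem_Icc.2 hT) (by rw [hstar, EReal.top_add_of_ne_bot (EReal.coe_ne_bot _)]),
      EReal.top_add_of_ne_bot (EReal.coe_ne_bot _)]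
    exact le_top
  have hmem : ∀ t ∈ Finset.Icc 1 T, θ t ∈ Θ :=
    Finset.forall_mem_Icc_one (hθ1 ▸ hΘ0) fun t ht => (hproj t ht).1
  have hround := fun t ht => proxGradient_round_le_of_mul hΘconv hRconv (fun j => (hRprop j).2)
    hlam hη hii hiii (hg t ht) (hLlip t ht _ (hmem t ht) _ (hg t ht)) (h0 t ht) (hsteps t ht)
    (hproj t ht) hθstar hstar
  have hfin : ∀ t ∈ Finset.Icc 1 T, (lam : EReal) * ∑ j, R j (θ t) ≠ ⊤ :=
    Finset.forall_mem_Icc_one (by simp [hθ1, hR0]) fun t ht => (hround t ht).1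
  have hreal := sum_add_le_sum_add_of_forall_Icc hη (K := G ^ 2)
    (a := fun t => ((lam : EReal) * ∑ j, R j (θ t)).toReal) (ℓ := fun t => L t (θ t))
    (b := fun t => ((lam : EReal) * ∑ j, R j θstar).toReal + L t θstar)
    (A := fun t => ‖θ t - θstar‖ ^ 2) (by simp [hθ1, hR0])
    (EReal.toReal_nonneg (mul_nonneg (EReal.coe_nonneg.2 hlam) (hRnonneg _))) (by positivity)
    fun t ht => (hround t ht).2
  simp only [hθ1, zero_sub, norm_neg] at hreal
  calc _ = ((∑ t ∈ Finset.Icc 1 T, (((lam : EReal) * ∑ j, R j (θ t)).toReal + L t (θ t)) : ℝ)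
        : EReal) := by
        rw [EReal.coe_finsetSum]
        exact Finset.sum_congr rfl fun t ht => by
          rw [EReal.coe_add, EReal.coe_toReal (hfin t ht) (hbot _)]
    _ ≤ _ := EReal.coe_le_coe_iff.2 hreal
    _ = _ := by
        rw [EReal.coe_add, EReal.coe_finsetSum]
        simp only [EReal.coe_add, EReal.coe_toReal hstar (hbot _)]

/-- regret bound with fixed learning rate. -/
theorem regret_fixed_rate {d J : ℕ} (hJ : 0 < J) (T : ℕ) (hT : 0 < T)
    (Θ : Set (EuclideanSpace ℝ (Fin d))) (hΘc : IsClosed Θ) (hΘconv : Convex ℝ Θ)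
    (hΘ0 : (0 : EuclideanSpace ℝ (Fin d)) ∈ Θ)
    (lam G η : ℝ) (hlam : 0 ≤ lam) (hG : 0 ≤ G) (hη : 0 < η)
    (L : ℕ → EuclideanSpace ℝ (Fin d) → ℝ)
    (hLconv : ∀ t ∈ Finset.Icc 1 T, ConvexOn ℝ Set.univ (L t))
    (hLlip : ∀ t ∈ Finset.Icc 1 T, ∀ θ₀ ∈ Θ, ∀ g : EuclideanSpace ℝ (Fin d),
      IsSubgradientAt (L t) g θ₀ → ‖g‖ ≤ G)
    (R : Fin J → EuclideanSpace ℝ (Fin d) → EReal)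
    (hRconv : ∀ j, ERealConvexOn (R j)) (hRlsc : ∀ j, LowerSemicontinuous (R j))
    (hRprop : ∀ j, ERealProper (R j))
    (hRnonneg : ∀ θ, (0 : EReal) ≤ ∑ j, R j θ)
    (hR0 : (∑ j, R j (0 : EuclideanSpace ℝ (Fin d))) = 0)
    -- condition (ii): each prox operator does not increase the previous `R_{j'}`
    (hii : ∀ j j' : Fin J, j' < j → ∀ θ θ' : EuclideanSpace ℝ (Fin d),
      IsProxPtOf (η * lam) (R j) θ θ' → R j' θ' ≤ R j' θ)
    -- condition (iii): projecting onto `Θ` does not increase `R`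
    (hiii : ∀ θ θ' : EuclideanSpace ℝ (Fin d), IsProjPt Θ θ θ' →
      (∑ j, R j θ') ≤ ∑ j, R j θ)
    -- the iterates of the algorithm
    (θ : ℕ → EuclideanSpace ℝ (Fin d)) (g : ℕ → EuclideanSpace ℝ (Fin d))
    (θtil : ℕ → Fin (J + 1) → EuclideanSpace ℝ (Fin d))
    (hθ1 : θ 1 = 0)
    (hg : ∀ t ∈ Finset.Icc 1 T, IsSubgradientAt (L t) (g t) (θ t))
    (h0 : ∀ t ∈ Finset.Icc 1 T, θtil t 0 = θ t - η • g t)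
    (hsteps : ∀ t ∈ Finset.Icc 1 T, ∀ j : Fin J,
      IsProxPtOf (η * lam) (R j) (θtil t j.castSucc) (θtil t j.succ))
    (hproj : ∀ t ∈ Finset.Icc 1 T, IsProjPt Θ (θtil t (Fin.last J)) (θ (t + 1)))
    -- `θ*` minimizes the batch objective over `Θ`
    (θstar : EuclideanSpace ℝ (Fin d)) (hθstar : θstar ∈ Θ)
    (hmin : ∀ θ' ∈ Θ,
      (∑ t ∈ Finset.Icc 1 T, ((lam : EReal) * (∑ j, R j θstar) + ((L t θstar : ℝ) : EReal)))
        ≤ ∑ t ∈ Finset.Icc 1 T, ((lam : EReal) * (∑ j, R j θ') + ((L t θ' : ℝ) : EReal))) :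
    -- Reg_T ≤ (ηT/2)G² + ‖θ*‖²/(2η)
    (∑ t ∈ Finset.Icc 1 T, ((lam : EReal) * (∑ j, R j (θ t)) + ((L t (θ t) : ℝ) : EReal)))
      ≤ (∑ t ∈ Finset.Icc 1 T, ((lam : EReal) * (∑ j, R j θstar) + ((L t θstar : ℝ) : EReal)))
        + ((η * T / 2 * G ^ 2 + ‖θstar‖ ^ 2 / (2 * η) : ℝ) : EReal) :=
  regret_fixed_rate_general T hT Θ hΘconv hΘ0 lam G η hlam hη L hLlip R hRconv hRprop hRnonneg hR0
    hii hiii θ g θtil hθ1 hg h0 hsteps hproj θstar hθstar
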